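/- Let n be a natural number and let 1 ≤ i ≠ j ≤ n. There exists an automorphism α_i^j of G_n such that α_i^j(x_i) = x_j x_i x_j⁻¹ and α_i^j(x_k) = x_k for all k ≠ i. -/

import Mathlib

/-!
Conjugation by `x_j^{±1}` fixes `x_j²` and inverts every other square `x_b²`. With the defining
relations this is exactly what makes the family obtained from `x_1, …, x_n` by conjugating `x_i`
alone by `x_j^{±1}` satisfy the defining relations again, so `x_i ↦ x_j^{±1} x_i x_j^{∓1}`,
`x_k ↦ x_k` defines an endomorphism of `G_n`. The endomorphisms for `+1` and `-1` both fix `x_j`,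
hence are mutually inverse.
-/

/-- The defining relations of the combinatorial Hantzsche-Wendt group `G_n`:
`x_i⁻¹ x_j² x_i = x_j⁻²` for all `i ≠ j`, written as relators. -/
def HWrels (n : ℕ) : Set (FreeGroup (Fin n)) :=
  {r | ∃ i j : Fin n, i ≠ j ∧
    r = (FreeGroup.of i)⁻¹ * FreeGroup.of j ^ 2 * FreeGroup.of i * FreeGroup.of j ^ 2}

/-- The combinatorial Hantzsche-Wendt group `G_n`. -/
abbrev HW (n : ℕ) : Type := PresentedGroup (HWrels n)

/-- The generators `x_1, …, x_n` of `G_n`. -/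
def x (n : ℕ) (i : Fin n) : HW n := PresentedGroup.of i

/-- For an `n × n` integer matrix `𝔞 = [a_ij]`, the element
`a_i = (x_1²)^{a_i1} ⋯ (x_n²)^{a_in}` of `A_n ≤ G_n`. -/
def aElt (n : ℕ) (𝔞 : Matrix (Fin n) (Fin n) ℤ) (i : Fin n) : HW n :=
  ((List.finRange n).map fun j => (x n j ^ 2) ^ 𝔞 i j).prod

section HWFamily

variable {G ι : Type*} [Group G] {y : ι → G}

def IsHWFamily (y : ι → G) : Prop :=
  ∀ a b, a ≠ b → (y a)⁻¹ * y b ^ 2 * y a = (y b ^ 2)⁻¹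

lemma IsHWFamily.inv_conj_sq_inv (hy : IsHWFamily y) {a b : ι} (hab : a ≠ b) :
    (y a)⁻¹ * (y b ^ 2)⁻¹ * y a = y b ^ 2 := by
  calc (y a)⁻¹ * (y b ^ 2)⁻¹ * y a = ((y a)⁻¹ * y b ^ 2 * y a)⁻¹ := by group
    _ = y b ^ 2 := by rw [hy a b hab, inv_inv]

lemma IsHWFamily.conj_sq (hy : IsHWFamily y) {a b : ι} (hab : a ≠ b) :
    y a * y b ^ 2 * (y a)⁻¹ = (y b ^ 2)⁻¹ := by
  calc y a * y b ^ 2 * (y a)⁻¹ = y a * ((y a)⁻¹ * (y b ^ 2)⁻¹ * y a) * (y a)⁻¹ := by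
        rw [hy.inv_conj_sq_inv hab]
    _ = (y b ^ 2)⁻¹ := by group

lemma IsHWFamily.zpow_conj_sq (hy : IsHWFamily y) {a b : ι} (hab : a ≠ b) (u : ℤˣ) :
    y a ^ (u : ℤ) * y b ^ 2 * (y a ^ (u : ℤ))⁻¹ = (y b ^ 2)⁻¹ := by
  rcases Int.units_eq_one_or u with rfl | rfl
  · simpa using hy.conj_sq hab
  · simpa using hy a b hab

variable [DecidableEq ι]

lemma IsHWFamily.update_conj (hy : IsHWFamily y) {i j : ι} (hij : i ≠ j) {c : G}
    (hcj : Commute c (y j)) (hc : ∀ b, b ≠ j → c * y b ^ 2 * c⁻¹ = (y b ^ 2)⁻¹) :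
    IsHWFamily (Function.update y i (c * y i * c⁻¹)) := by
  have hc' : ∀ b, b ≠ j → c⁻¹ * y b ^ 2 * c = (y b ^ 2)⁻¹ := fun b hb => by
    calc c⁻¹ * y b ^ 2 * c = (c⁻¹ * (c * y b ^ 2 * c⁻¹) * c)⁻¹ := by rw [hc b hb]; group
      _ = (y b ^ 2)⁻¹ := by group
  intro a b hab
  rcases eq_or_ne a i with rfl | ha
  · rw [Function.update_self, Function.update_of_ne hab.symm]
    have hconj : (c * y a * c⁻¹)⁻¹ * y b ^ 2 * (c * y a * c⁻¹)
        = c * ((y a)⁻¹ * (c⁻¹ * y b ^ 2 * c) * y a) * c⁻¹ := by group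
    rw [hconj]
    rcases eq_or_ne b j with rfl | hbj
    · have hcj2 := hcj.pow_right 2
      have hfix : c⁻¹ * y b ^ 2 * c = y b ^ 2 := by simpa using hcj2.inv_left.mul_inv_cancel
      rw [hfix, hy a b hab, hcj2.inv_right.mul_inv_cancel]
    · rw [hc' b hbj, hy.inv_conj_sq_inv hab, hc b hbj]
  rcases eq_or_ne b i with rfl | hb
  · rw [Function.update_of_ne ha, Function.update_self, conj_pow, hc b hij,
      hy.inv_conj_sq_inv hab, inv_inv]
  · rw [Function.update_of_ne ha, Function.update_of_ne hb]
    exact hy a b hab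

lemma IsHWFamily.update_zpow_conj (hy : IsHWFamily y) {i j : ι} (hij : i ≠ j) (u : ℤˣ) :
    IsHWFamily (Function.update y i (y j ^ (u : ℤ) * y i * (y j ^ (u : ℤ))⁻¹)) :=
  hy.update_conj hij ((Commute.refl (y j)).zpow_left _) fun _ hb => hy.zpow_conj_sq hb.symm u

end HWFamily

lemma isHWFamily_x (n : ℕ) : IsHWFamily (x n) := fun a b hab =>
  eq_inv_of_mul_eq_one_left <|
    (QuotientGroup.eq_one_iff _).mpr (Subgroup.subset_normalClosure ⟨a, b, hab, rfl⟩)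

namespace HW

variable {n : ℕ} {G : Type*} [Group G]

def lift (y : Fin n → G) (hy : IsHWFamily y) : HW n →* G :=
  PresentedGroup.toGroup (rels := HWrels n) (f := y) <| by
    rintro _ ⟨a, b, hab, rfl⟩
    simpa [← mul_assoc] using mul_eq_one_iff_eq_inv.mpr (hy a b hab)

@[simp]
lemma lift_x (y : Fin n → G) (hy : IsHWFamily y) (k : Fin n) : lift y hy (x n k) = y k :=
  PresentedGroup.toGroup.of _

/-- `α_i^j` of the paper is `partialConj hij 1`. -/
def partialConj {i j : Fin n} (hij : i ≠ j) (u : ℤˣ) : HW n →* HW n :=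
  lift _ ((isHWFamily_x n).update_zpow_conj hij u)

variable {i j : Fin n} (hij : i ≠ j) (u : ℤˣ)

lemma partialConj_x_self :
    partialConj hij u (x n i) = x n j ^ (u : ℤ) * x n i * (x n j ^ (u : ℤ))⁻¹ := by
  simp [partialConj]

lemma partialConj_x_of_ne {k : Fin n} (hk : k ≠ i) : partialConj hij u (x n k) = x n k := by
  simp [partialConj, hk]

lemma partialConj_comp_partialConj_neg :
    (partialConj hij u).comp (partialConj hij (-u)) = MonoidHom.id (HW n) := by
  refine PresentedGroup.ext fun k => ?_
  change partialConj hij u (partialConj hij (-u) (x n k)) = x n k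
  rcases eq_or_ne k i with rfl | hk
  · simp only [partialConj_x_self, map_mul, map_inv, map_zpow, Units.val_neg, zpow_neg, inv_inv,
      partialConj_x_of_ne hij _ hij.symm]
    group
  · rw [partialConj_x_of_ne hij _ hk, partialConj_x_of_ne hij _ hk]

def partialConjEquiv : HW n ≃* HW n :=
  MonoidHom.toMulEquiv (partialConj hij u) (partialConj hij (-u))
    (by simpa using partialConj_comp_partialConj_neg hij (-u))
    (partialConj_comp_partialConj_neg hij u)

end HW

theorem stmt8 (n : ℕ) (i j : Fin n) (hij : i ≠ j) :
    ∃ α : HW n ≃* HW n,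
      α (x n i) = x n j * x n i * (x n j)⁻¹ ∧ ∀ k, k ≠ i → α (x n k) = x n k :=
  ⟨HW.partialConjEquiv hij 1, (HW.partialConj_x_self hij 1).trans (by simp),
    fun _ hk => HW.partialConj_x_of_ne hij 1 hk⟩
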